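/- Let b > 1 be a constant, let a, β : [1,∞) → ℝ be continuous functions with a(s) = 0 and β(s) = 1 for all s ≥ b, and let h : [1,∞) → ℝ be differentiable and nonnegative with h'(s) ≥ (1/s − a(s))·h(s) + s·β(s) for all s ≥ 1. Suppose moreover that for some real number m, √(h(s)) − s → −m as s → ∞. Then 2m ≤ b − ∫₁^b β(u)·exp(−∫_u^b a(v) dv) du − exp(−∫₁^b a(u) du)·h(1). -/

import Mathlib

/-- The mass estimate extracted from the integrated Riccati-type inequality:
if `√(h s) − s → −m` as `s → ∞`, then
`2m ≤ b − ∫₁^b β·exp(−∫_u^b a) − exp(−∫₁^b a)·h 1`. -/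
theorem stmt_2 (b : ℝ) (hb : 1 < b) (a β h h' : ℝ → ℝ)
    (ha : ContinuousOn a (Set.Ici 1)) (hβ : ContinuousOn β (Set.Ici 1))
    (ha0 : ∀ s ≥ b, a s = 0) (hβ1 : ∀ s ≥ b, β s = 1)
    (hdiff : ∀ s ∈ Set.Ici (1:ℝ), HasDerivAt h (h' s) s)
    (hnonneg : ∀ s ∈ Set.Ici (1:ℝ), 0 ≤ h s)
    (hineq : ∀ s ∈ Set.Ici (1:ℝ), h' s ≥ (1 / s - a s) * h s + s * β s)
    (m : ℝ)
    (hm : Filter.Tendsto (fun s => Real.sqrt (h s) - s) Filter.atTop (nhds (-m))) :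
    2 * m ≤ b - (∫ u in (1:ℝ)..b, β u * Real.exp (-(∫ v in u..b, a v)))
      - Real.exp (-(∫ u in (1:ℝ)..b, a u)) * h 1 := by
  -- extend a, β continuously to all of ℝ
  set at' : ℝ → ℝ := fun s => a (max s 1) with hat'
  set bt : ℝ → ℝ := fun s => β (max s 1) with hbt
  have hmax : Continuous fun s : ℝ => max s 1 := continuous_id.max continuous_const
  have hmem : ∀ s : ℝ, max s 1 ∈ Set.Ici (1:ℝ) := fun s => Set.mem_Ici.2 (le_max_right _ _)
  have hca : Continuous at' := ha.comp_continuous hmax hmem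
  have hcb : Continuous bt := hβ.comp_continuous hmax hmem
  have hateq : ∀ s ≥ (1:ℝ), at' s = a s := by
    intro s hs; simp [hat', max_eq_left hs]
  have hbteq : ∀ s ≥ (1:ℝ), bt s = β s := by
    intro s hs; simp [hbt, max_eq_left hs]
  -- primitives
  set A : ℝ → ℝ := fun s => ∫ u in (1:ℝ)..s, at' u with hA
  have hdA : ∀ s : ℝ, HasDerivAt A (at' s) s := fun s =>
    intervalIntegral.integral_hasDerivAt_right (hca.intervalIntegrable 1 s)
      hca.stronglyMeasurable.stronglyMeasurableAtFilter hca.continuousAt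
  have hcA : Continuous A := by
    rw [continuous_iff_continuousAt]; exact fun s => (hdA s).continuousAt
  set E : ℝ → ℝ := fun u => Real.exp (A u) * bt u with hE
  have hcE : Continuous E := (Real.continuous_exp.comp hcA).mul hcb
  set P : ℝ → ℝ := fun s => ∫ u in (1:ℝ)..s, E u with hP
  have hdP : ∀ s : ℝ, HasDerivAt P (E s) s := fun s =>
    intervalIntegral.integral_hasDerivAt_right (hcE.intervalIntegrable 1 s)
      hcE.stronglyMeasurable.stronglyMeasurableAtFilter hcE.continuousAt
  -- integrating factor
  set μ : ℝ → ℝ := fun s => Real.exp (A s - Real.log s) with hμ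
  have hμval : ∀ s : ℝ, 0 < s → μ s = Real.exp (A s) / s := by
    intro s hs; rw [hμ]; simp [Real.exp_sub, Real.exp_log hs]
  have hdμ : ∀ s : ℝ, s ≠ 0 → HasDerivAt μ ((at' s - 1/s) * μ s) s := by
    intro s hs
    have := ((hdA s).sub (Real.hasDerivAt_log hs)).exp
    convert this using 1
    · rfl
    rw [hμ]; rw [one_div, Pi.sub_apply]; ring
  -- the monotone quantity
  set g : ℝ → ℝ := fun s => μ s * h s - P s with hg
  have hdg : ∀ s ∈ Set.Ici (1:ℝ), HasDerivAt g
      ((at' s - 1/s) * μ s * h s + μ s * h' s - E s) s := by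
    intro s hs
    have hs1 : (1:ℝ) ≤ s := hs
    have hs0 : s ≠ 0 := by positivity
    exact ((hdμ s hs0).mul (hdiff s hs)).sub (hdP s)
  have hg'nonneg : ∀ s ∈ Set.Ici (1:ℝ),
      0 ≤ (at' s - 1/s) * μ s * h s + μ s * h' s - E s := by
    intro s hs
    have hs1 : (1:ℝ) ≤ s := hs
    have hs0 : 0 < s := by linarith
    have hμpos : 0 < μ s := Real.exp_pos _
    have h1 : μ s * h' s ≥ μ s * ((1/s - a s) * h s + s * β s) :=
      mul_le_mul_of_nonneg_left (hineq s hs) hμpos.le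
    have hμs : μ s * s = Real.exp (A s) := by
      rw [hμval s hs0]; field_simp
    have hEeq : E s = μ s * s * β s := by
      show Real.exp (A s) * bt s = _
      rw [hbteq s hs1, hμs]
    have hae : at' s = a s := hateq s hs1
    rw [hEeq, hae]
    have expand : μ s * ((1/s - a s) * h s + s * β s)
        = (1/s - a s) * μ s * h s + μ s * s * β s := by ring
    nlinarith [h1, expand]
  have hmono : MonotoneOn g (Set.Ici (1:ℝ)) :=
    monotoneOn_of_hasDerivWithinAt_nonneg (convex_Ici 1)
      (fun x hx => ((hdg x hx).continuousAt).continuousWithinAt)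
      (fun x hx => ((hdg x (interior_subset hx)).hasDerivWithinAt))
      (fun x hx => hg'nonneg x (interior_subset hx))
  have hg1 : g 1 = h 1 := by
    have hA1 : A 1 = 0 := intervalIntegral.integral_same
    have hP1 : P 1 = 0 := intervalIntegral.integral_same
    show Real.exp (A 1 - Real.log 1) * h 1 - P 1 = h 1
    rw [hA1, hP1]; simp
  -- constancy of A beyond b
  have hAb : ∀ s ≥ b, A s = A b := by
    intro s hs
    have hsplit : A b + (∫ u in b..s, at' u) = A s :=
      intervalIntegral.integral_add_adjacent_intervals
        (hca.intervalIntegrable 1 b) (hca.intervalIntegrable b s)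
    have hz : (∫ u in b..s, at' u) = 0 := by
      rw [intervalIntegral.integral_congr (g := fun _ => (0:ℝ))]
      · simp
      · intro u hu
        rw [Set.uIcc_of_le hs] at hu
        have hub : b ≤ u := hu.1
        have hu1 : (1:ℝ) ≤ u := le_trans hb.le hub
        rw [hateq u hu1]; exact ha0 u hub
    linarith
  -- P beyond b
  have hPb : ∀ s ≥ b, P s = P b + (s - b) * Real.exp (A b) := by
    intro s hs
    have hsplit : P b + (∫ u in b..s, E u) = P s :=
      intervalIntegral.integral_add_adjacent_intervals
        (hcE.intervalIntegrable 1 b) (hcE.intervalIntegrable b s)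
    have hconst : (∫ u in b..s, E u) = (s - b) * Real.exp (A b) := by
      rw [intervalIntegral.integral_congr (g := fun _ => Real.exp (A b))]
      · simp [smul_eq_mul]
      · intro u hu
        rw [Set.uIcc_of_le hs] at hu
        have hub : b ≤ u := hu.1
        have hu1 : (1:ℝ) ≤ u := le_trans hb.le hub
        show Real.exp (A u) * bt u = Real.exp (A b)
        rw [hAb u hub, hbteq u hu1, hβ1 u hub, mul_one]
    linarith
  -- the constant C
  set C : ℝ := b - Real.exp (-(A b)) * P b - Real.exp (-(A b)) * h 1 with hC
  have hE01 : Real.exp (A b) * Real.exp (-(A b)) = 1 := by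
    rw [← Real.exp_add]; simp
  -- lower bound on h
  have hlow : ∀ s ≥ b, s * (s - C) ≤ h s := by
    intro s hs
    have hs1 : (1:ℝ) ≤ s := le_trans hb.le hs
    have hs0 : 0 < s := by linarith
    have hmg : g 1 ≤ g s := hmono (Set.mem_Ici.2 le_rfl) (Set.mem_Ici.2 hs1) hs1
    rw [hg1] at hmg
    have hgs : μ s * h s - P s = g s := rfl
    have hμs : μ s = Real.exp (A b) / s := by rw [hμval s hs0, hAb s hs]
    have h2 : h 1 + P b + (s - b) * Real.exp (A b) ≤ Real.exp (A b) / s * h s := by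
      rw [← hμs]
      have := hPb s hs
      linarith [hmg, hgs]
    have hexp : (0:ℝ) < Real.exp (A b) := Real.exp_pos _
    have h3 : (h 1 + P b + (s - b) * Real.exp (A b)) * s ≤ Real.exp (A b) * h s := by
      have h4 : Real.exp (A b) / s * h s * s = Real.exp (A b) * h s := by
        field_simp
      calc (h 1 + P b + (s - b) * Real.exp (A b)) * s
          ≤ Real.exp (A b) / s * h s * s := mul_le_mul_of_nonneg_right h2 hs0.le
        _ = Real.exp (A b) * h s := h4
    have goal_eq : s * (s - C)
        = (h 1 + P b + (s - b) * Real.exp (A b)) * s * Real.exp (-(A b)) := by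
      rw [hC]; linear_combination (-(s * (s - b))) * hE01
    rw [goal_eq]
    calc (h 1 + P b + (s - b) * Real.exp (A b)) * s * Real.exp (-(A b))
        ≤ Real.exp (A b) * h s * Real.exp (-(A b)) :=
          mul_le_mul_of_nonneg_right h3 (Real.exp_pos _).le
      _ = (Real.exp (A b) * Real.exp (-(A b))) * h s := by ring
      _ = h s := by rw [hE01, one_mul]
  -- identify the RHS with C
  have e1 : (∫ u in (1:ℝ)..b, a u) = A b := by
    apply intervalIntegral.integral_congr
    intro u hu
    rw [Set.uIcc_of_le hb.le] at hu
    exact (hateq u hu.1).symm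
  have e2 : ∀ u ∈ Set.Icc (1:ℝ) b, (∫ v in u..b, a v) = A b - A u := by
    intro u hu
    have heq : (∫ v in u..b, a v) = ∫ v in u..b, at' v := by
      apply intervalIntegral.integral_congr
      intro v hv
      rw [Set.uIcc_of_le hu.2] at hv
      exact (hateq v (le_trans hu.1 hv.1)).symm
    have hsplit : A u + (∫ v in u..b, at' v) = A b :=
      intervalIntegral.integral_add_adjacent_intervals
        (hca.intervalIntegrable 1 u) (hca.intervalIntegrable u b)
    rw [heq]; linarith
  have e3 : (∫ u in (1:ℝ)..b, β u * Real.exp (-(∫ v in u..b, a v)))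
      = Real.exp (-(A b)) * P b := by
    rw [show Real.exp (-(A b)) * P b = ∫ u in (1:ℝ)..b, Real.exp (-(A b)) * E u from
      (intervalIntegral.integral_const_mul _ _).symm]
    apply intervalIntegral.integral_congr
    intro u hu
    rw [Set.uIcc_of_le hb.le] at hu
    show β u * Real.exp (-(∫ v in u..b, a v)) = Real.exp (-(A b)) * E u
    rw [e2 u hu]
    show β u * Real.exp (-(A b - A u)) = Real.exp (-(A b)) * (Real.exp (A u) * bt u)
    rw [hbteq u hu.1, neg_sub, Real.exp_sub, Real.exp_neg]
    ring
  have hRHS : b - (∫ u in (1:ℝ)..b, β u * Real.exp (-(∫ v in u..b, a v)))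
      - Real.exp (-(∫ u in (1:ℝ)..b, a u)) * h 1 = C := by
    rw [e1, e3, hC]
  -- limit argument
  have key : ∀ ε > (0:ℝ), m ≤ C/2 + ε := by
    intro ε hε
    have hev : ∀ᶠ s in Filter.atTop, -(C/2 + ε) ≤ Real.sqrt (h s) - s := by
      rw [Filter.eventually_atTop]
      refine ⟨max b (max (C/2 + ε) ((C/2+ε)^2/(2*ε) + 1)), fun s hs => ?_⟩
      have hsb : b ≤ s := le_trans (le_max_left _ _) hs
      have hs2 : C/2 + ε ≤ s := le_trans (le_trans (le_max_left _ _) (le_max_right _ _)) hs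
      have hs3 : (C/2+ε)^2/(2*ε) + 1 ≤ s :=
        le_trans (le_trans (le_max_right _ _) (le_max_right _ _)) hs
      have hε2 : (0:ℝ) < 2*ε := by linarith
      have hs3' : (C/2+ε)^2 ≤ 2*ε*s := by
        rw [← div_le_iff₀' hε2]; linarith
      have hsq : (s - (C/2+ε))^2 ≤ h s := by
        have := hlow s hsb
        nlinarith
      have hsqrt := Real.sqrt_le_sqrt hsq
      rw [Real.sqrt_sq (by linarith : (0:ℝ) ≤ s - (C/2+ε))] at hsqrt
      linarith
    have := ge_of_tendsto hm hev
    linarith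
  have hm2 : m ≤ C/2 := by
    by_contra hcon
    push_neg at hcon
    have := key ((m - C/2)/2) (by linarith)
    linarith
  rw [hRHS]
  linarith
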